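/- Let θ ∈ (0,1), λ > 0, K > 0, h ≥ 1 an integer, and E a linear subspace of ℝⁿ. Let w : (0,∞) × ℝⁿ → ℝ be such that t ↦ w(t,x) is measurable for every x, sup_{t>0, x∈ℝⁿ} |w(t,x)| ≤ K, and for all t > 0, x ∈ ℝⁿ and v ∈ E with |v| ≤ 1: (a) |w(t,x+v) − w(t,x)| ≤ K |v|^{θ/(2h+1)}, and (b) |w(t,x+v) − w(t,x)| ≤ K ( t^{θ/2 − 1/2 − h} + 1 ) |v|. Then U(x) = ∫₀^∞ e^{−λt} w(t,x) dt converges absolutely for every x, and there exists a constant C depending only on θ, λ and h such that |U(x+v) − U(x)| ≤ C K |v|^{(2+θ)/(2h+1)} for all x ∈ ℝⁿ and all v ∈ E with 0 < |v| ≤ 1. -/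

import Mathlib

/-!
Write `H = 2h + 1` and split the Laplace integral of the difference `w(t, x + v) - w(t, x)` at
`T = |v|^{2/H}`. On `(0, T]` the Hölder bound gives at most `K |v|^{θ/H} T = K |v|^{(2+θ)/H}`.
On `(T, ∞)` the Lipschitz-type bound gives at most `K |v| (∫_T^∞ t^α dt + 1/λ)` with
`α = θ/2 - 1/2 - h < -1`, and `|v| T^{α+1} = |v|^{(2+θ)/H}` while `|v| ≤ |v|^{(2+θ)/H}`.
-/

open MeasureTheory

noncomputable section

/-- `ℝⁿ` as a Euclidean space. -/
abbrev En (n : ℕ) := EuclideanSpace ℝ (Fin n)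

open Set Real

lemma integrableOn_exp_neg_mul_mul_of_abs_le {g : ℝ → ℝ} {lam K : ℝ} (hlam : 0 < lam)
    (hg : AEMeasurable g (volume.restrict (Ioi 0))) (hgK : ∀ t, 0 < t → |g t| ≤ K) :
    IntegrableOn (fun t => exp (-(lam * t)) * g t) (Ioi 0) := by
  have hexp : IntegrableOn (fun t => exp (-(lam * t))) (Ioi 0) := by
    simpa only [neg_mul] using integrableOn_exp_mul_Ioi (neg_lt_zero.2 hlam) 0
  refine (hexp.mul_const K).mono'
    ((by fun_prop : Continuous fun t => exp (-(lam * t))).aestronglyMeasurable.mul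
      hg.aestronglyMeasurable) ?_
  filter_upwards [ae_restrict_mem measurableSet_Ioi] with t ht
  rw [norm_mul, Real.norm_of_nonneg (exp_pos _).le, Real.norm_eq_abs]
  exact mul_le_mul_of_nonneg_left (hgK t ht) (exp_pos _).le

theorem abs_integral_Ioi_le_of_split {f : ℝ → ℝ} {T A B α lam : ℝ} (hT : 0 < T)
    (hα : α < -1) (hlam : 0 < lam) (hB : 0 ≤ B) (hf : IntegrableOn f (Ioi 0))
    (hnear : ∀ t ∈ Ioc 0 T, |f t| ≤ A)
    (hfar : ∀ t ∈ Ioi T, |f t| ≤ B * (t ^ α + exp (-(lam * t)))) :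
    |∫ t in Ioi 0, f t| ≤ A * T + B * (T ^ (α + 1) / -(α + 1) + lam⁻¹) := by
  rw [← Ioc_union_Ioi_eq_Ioi hT.le, setIntegral_union Ioc_disjoint_Ioi_same measurableSet_Ioi
    (hf.mono_set Ioc_subset_Ioi_self) (hf.mono_set (Ioi_subset_Ioi hT.le))]
  have hpow : IntegrableOn (fun t : ℝ => t ^ α) (Ioi T) := integrableOn_Ioi_rpow_of_lt hα hT
  have hexp : IntegrableOn (fun t => exp (-(lam * t))) (Ioi T) := by
    simpa only [neg_mul] using integrableOn_exp_mul_Ioi (neg_lt_zero.2 hlam) T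
  have hint_near : |∫ t in Ioc 0 T, f t| ≤ A * T := by
    have := norm_setIntegral_le_of_norm_le_const (f := f)
      (measure_Ioc_lt_top (μ := volume)) hnear
    rwa [Real.volume_real_Ioc_of_le hT.le, sub_zero] at this
  have hint_far : |∫ t in Ioi T, f t| ≤ B * (T ^ (α + 1) / -(α + 1) + lam⁻¹) :=
    calc |∫ t in Ioi T, f t| = ‖∫ t in Ioi T, f t‖ := (Real.norm_eq_abs _).symm
      _ ≤ ∫ t in Ioi T, B * (t ^ α + exp (-(lam * t))) :=
          norm_integral_le_of_norm_le ((hpow.add hexp).const_mul B)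
            ((ae_restrict_mem measurableSet_Ioi).mono hfar)
      _ = B * (T ^ (α + 1) / -(α + 1) + exp (-(lam * T)) * lam⁻¹) := by
          simp_rw [integral_const_mul, integral_add hpow hexp, integral_Ioi_rpow_of_lt hα hT,
            ← neg_mul, integral_exp_mul_Ioi (neg_lt_zero.2 hlam), div_neg]
          ring
      _ ≤ B * (T ^ (α + 1) / -(α + 1) + lam⁻¹) := by
          gcongr
          exact mul_le_of_le_one_left (inv_pos.2 hlam).le
            (exp_le_one_iff.2 (neg_nonpos.2 (mul_pos hlam hT).le))
  exact (abs_add_le _ _).trans (add_le_add hint_near hint_far)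

lemma abs_exp_neg_mul_mul_le_of_abs_le {lam t d B α : ℝ} (hlam : 0 ≤ lam) (ht : 0 ≤ t)
    (hB : 0 ≤ B) (hd : |d| ≤ B * (t ^ α + 1)) :
    |exp (-(lam * t)) * d| ≤ B * (t ^ α + exp (-(lam * t))) := by
  have hexp_le : exp (-(lam * t)) ≤ 1 := exp_le_one_iff.2 (neg_nonpos.2 (mul_nonneg hlam ht))
  have hpow : 0 ≤ t ^ α := rpow_nonneg ht α
  rw [abs_mul, abs_of_pos (exp_pos _)]
  calc exp (-(lam * t)) * |d| ≤ exp (-(lam * t)) * (B * (t ^ α + 1)) := by gcongr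
    _ = B * (exp (-(lam * t)) * t ^ α + exp (-(lam * t))) := by ring
    _ ≤ B * (t ^ α + exp (-(lam * t))) := by gcongr; exact mul_le_of_le_one_left hpow hexp_le

theorem abs_integral_exp_neg_mul_le_rpow {g : ℝ → ℝ} {θ lam h K r : ℝ} (hθ : 0 ≤ θ)
    (hθh : θ + 1 < 2 * h) (hlam : 0 < lam) (hK : 0 ≤ K) (hr0 : 0 < r) (hr1 : r ≤ 1)
    (hg : IntegrableOn (fun t => exp (-(lam * t)) * g t) (Ioi 0))
    (hholder : ∀ t, 0 < t → |g t| ≤ K * r ^ (θ / (2 * h + 1)))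
    (hlip : ∀ t, 0 < t → |g t| ≤ K * (t ^ (θ / 2 - 1 / 2 - h) + 1) * r) :
    |∫ t in Ioi 0, exp (-(lam * t)) * g t| ≤
      (1 + (h - 1 / 2 - θ / 2)⁻¹ + lam⁻¹) * K * r ^ ((2 + θ) / (2 * h + 1)) := by
  set H := 2 * h + 1 with hH_def
  set e := (2 + θ) / H with he_def
  set α := θ / 2 - 1 / 2 - h with hα_def
  set T := r ^ (2 / H)
  have hH : 0 < H := by linarith
  have hT : 0 < T := rpow_pos_of_pos hr0 _
  have hα : α < -1 := by linarith
  have hnear_exp : r ^ (θ / H) * T = r ^ e := by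
    rw [← rpow_add hr0]; congr 1; ring
  have hfar_exp : r * T ^ (α + 1) = r ^ e := by
    calc r * T ^ (α + 1) = r ^ (1 : ℝ) * r ^ (2 / H * (α + 1)) := by
          rw [rpow_one, rpow_mul hr0.le]
      _ = r ^ e := by
          rw [← rpow_add hr0, he_def, hα_def]
          congr 1
          field_simp
          ring
  have hr_le : r ≤ r ^ e := by
    simpa only [rpow_one] using
      rpow_le_rpow_of_exponent_ge hr0 hr1 ((div_le_one hH).2 (by linarith) : e ≤ 1)
  have hneg_exponent : -(α + 1) = h - 1 / 2 - θ / 2 := by rw [hα_def]; ring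
  have hnear : ∀ t ∈ Ioc 0 T, |exp (-(lam * t)) * g t| ≤ K * r ^ (θ / H) := by
    intro t ht
    rw [abs_mul, abs_of_pos (exp_pos _)]
    have hexp_le : exp (-(lam * t)) ≤ 1 := exp_le_one_iff.2 (neg_nonpos.2 (mul_pos hlam ht.1).le)
    exact (mul_le_of_le_one_left (abs_nonneg _) hexp_le).trans (hholder t ht.1)
  have hfar : ∀ t ∈ Ioi T, |exp (-(lam * t)) * g t| ≤ K * r * (t ^ α + exp (-(lam * t))) :=
    fun t ht => abs_exp_neg_mul_mul_le_of_abs_le hlam.le (hT.trans ht).le (by positivity)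
      ((hlip t (hT.trans ht)).trans_eq (by ring))
  calc |∫ t in Ioi 0, exp (-(lam * t)) * g t|
      ≤ K * r ^ (θ / H) * T + K * r * (T ^ (α + 1) / -(α + 1) + lam⁻¹) :=
        abs_integral_Ioi_le_of_split hT hα hlam (by positivity) hg hnear hfar
    _ = K * r ^ e + K * r ^ e * (h - 1 / 2 - θ / 2)⁻¹ + K * r * lam⁻¹ := by
        rw [hneg_exponent]
        linear_combination K * hnear_exp + K * (h - 1 / 2 - θ / 2)⁻¹ * hfar_exp
    _ ≤ K * r ^ e + K * r ^ e * (h - 1 / 2 - θ / 2)⁻¹ + K * r ^ e * lam⁻¹ := by gcongr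
    _ = (1 + (h - 1 / 2 - θ / 2)⁻¹ + lam⁻¹) * K * r ^ e := by ring

/-- Abstract integral estimate behind the `(2+θ)`-Hölder regularity of the
resolvent in the non-elliptic directions: if `|w| ≤ K`, and for `v ∈ E` with `|v| ≤ 1` both
`|w(t,x+v) − w(t,x)| ≤ K|v|^{θ/(2h+1)}` and
`|w(t,x+v) − w(t,x)| ≤ K(t^{θ/2−1/2−h} + 1)|v|`, then
`U(x) = ∫₀^∞ e^{−λt} w(t,x) dt` converges absolutely and
`|U(x+v) − U(x)| ≤ C K |v|^{(2+θ)/(2h+1)}` for `v ∈ E` with `0 < |v| ≤ 1`, where `C`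
depends only on `θ`, `λ` and `h`. -/
theorem stmt19 (θ lam : ℝ) (hθ0 : 0 < θ) (hθ1 : θ < 1) (hlam : 0 < lam)
    (h : ℕ) (hh : 1 ≤ h) :
    ∃ C : ℝ, 0 < C ∧
      ∀ (n : ℕ) (E : Submodule ℝ (En n)) (K : ℝ), 0 < K →
      ∀ w : ℝ → En n → ℝ,
      (∀ x, AEMeasurable (fun t => w t x) (volume.restrict (Set.Ioi (0 : ℝ)))) →
      (∀ t : ℝ, 0 < t → ∀ x, |w t x| ≤ K) →
      (∀ t : ℝ, 0 < t → ∀ x, ∀ v ∈ E, ‖v‖ ≤ 1 →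
        |w t (x + v) - w t x| ≤ K * ‖v‖ ^ (θ / (2 * (h : ℝ) + 1))) →
      (∀ t : ℝ, 0 < t → ∀ x, ∀ v ∈ E, ‖v‖ ≤ 1 →
        |w t (x + v) - w t x| ≤ K * (t ^ (θ / 2 - 1 / 2 - (h : ℝ)) + 1) * ‖v‖) →
      (∀ x, IntegrableOn (fun t => Real.exp (-(lam * t)) * w t x) (Set.Ioi 0)) ∧
      ∀ x : En n, ∀ v ∈ E, 0 < ‖v‖ → ‖v‖ ≤ 1 →
        |(∫ t in Set.Ioi (0 : ℝ), Real.exp (-(lam * t)) * w t (x + v)) -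
            ∫ t in Set.Ioi (0 : ℝ), Real.exp (-(lam * t)) * w t x| ≤
          C * K * ‖v‖ ^ ((2 + θ) / (2 * (h : ℝ) + 1)) := by
  have hθh : θ + 1 < 2 * (h : ℝ) := by
    have : (1 : ℝ) ≤ h := by exact_mod_cast hh
    linarith
  have hgap : 0 < (h : ℝ) - 1 / 2 - θ / 2 := by linarith
  refine ⟨1 + ((h : ℝ) - 1 / 2 - θ / 2)⁻¹ + lam⁻¹, by positivity, ?_⟩
  intro n E K hK w hw hwb hholder hlip
  have hint : ∀ x, IntegrableOn (fun t => Real.exp (-(lam * t)) * w t x) (Set.Ioi 0) :=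
    fun x => integrableOn_exp_neg_mul_mul_of_abs_le hlam (hw x) fun t ht => hwb t ht x
  refine ⟨hint, fun x v hvE hv0 hv1 => ?_⟩
  rw [← integral_sub (hint _) (hint _)]
  simp_rw [← mul_sub]
  exact abs_integral_exp_neg_mul_le_rpow hθ0.le hθh hlam hK.le hv0 hv1
    (by simpa only [mul_sub, Pi.sub_def] using (hint (x + v)).sub (hint x))
    (fun t ht => hholder t ht x v hvE hv1) (fun t ht => hlip t ht x v hvE hv1)
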